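/- arXiv:2605.09229 — 2 statements merged into one kernel-verified Lean document; each statement's English description precedes it below -/
import Mathlib

section
/- Let γ = ρ + ρ^{−1} with 0 < |ρ| < 1, let N ≥ 1, and set θ_j = 2πj/N. Then for every integer 0 ≤ ℓ ≤ N, ∑_{j=1}^{N−1} (1 − cos(ℓθ_j))/(γ − 2cos θ_j) = N · ((1 + ρ^N) − (ρ^ℓ + ρ^{N−ℓ})) / ((ρ^{−1} − ρ)(1 − ρ^N)). -/
open Real Finset Complex

lemma aux_sum_pow {N : ℕ} {ζ : ℂ} (hζ : IsPrimitiveRoot ζ N) (k : ℕ) :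
    ∑ j ∈ Finset.range N, (ζ ^ k) ^ j = if N ∣ k then (N : ℂ) else 0 := by
  by_cases h : N ∣ k
  · rw [if_pos h]
    have h1 : ζ ^ k = 1 := (hζ.pow_eq_one_iff_dvd k).2 h
    simp [h1]
  · rw [if_neg h]
    have h1 : ζ ^ k ≠ 1 := fun hh => h ((hζ.pow_eq_one_iff_dvd k).1 hh)
    rw [geom_sum_eq h1]
    have : (ζ ^ k) ^ N = 1 := by
      rw [← pow_mul, mul_comm, pow_mul, hζ.pow_eq_one, one_pow]
    simp [this]

lemma aux_T {N : ℕ} {ζ : ℂ} (hζ : IsPrimitiveRoot ζ N) (c : ℂ)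
    (hc : ∀ j : ℕ, 1 - c * ζ ^ j ≠ 0) (hcN : 1 - c ^ N ≠ 0)
    (k m : ℕ) (hm : m < N) (hd : N ∣ (k + m)) :
    ∑ j ∈ Finset.range N, (ζ ^ k) ^ j / (1 - c * ζ ^ j) = N * c ^ m / (1 - c ^ N) := by
  have key : ∀ j : ℕ, (ζ ^ k) ^ j / (1 - c * ζ ^ j)
      = (∑ i ∈ Finset.range N, c ^ i * (ζ ^ (k + i)) ^ j) / (1 - c ^ N) := by
    intro j
    have hne : c * ζ ^ j ≠ 1 := by
      intro hh; exact hc j (by rw [hh]; ring)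
    have hgeom : ∑ i ∈ Finset.range N, (c * ζ ^ j) ^ i
        = ((c * ζ ^ j) ^ N - 1) / (c * ζ ^ j - 1) := geom_sum_eq hne N
    have hpow : (c * ζ ^ j) ^ N = c ^ N := by
      rw [mul_pow, ← pow_mul, mul_comm j N, pow_mul, hζ.pow_eq_one, one_pow, mul_one]
    have hsum : ∑ i ∈ Finset.range N, c ^ i * (ζ ^ (k + i)) ^ j
        = (ζ ^ k) ^ j * ∑ i ∈ Finset.range N, (c * ζ ^ j) ^ i := by
      rw [Finset.mul_sum]
      refine Finset.sum_congr rfl fun i _ => ?_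
      rw [mul_pow, pow_add, mul_pow, ← pow_mul, ← pow_mul, ← pow_mul, mul_comm j i]
      ring
    have h1 : c * ζ ^ j - 1 ≠ 0 := sub_ne_zero.2 hne
    rw [hsum, hgeom, hpow]
    field_simp [hc j, h1]
    ring
  rw [Finset.sum_congr rfl fun j _ => key j, ← Finset.sum_div]
  congr 1
  rw [Finset.sum_comm]
  have : ∀ i ∈ Finset.range N, (∑ j ∈ Finset.range N, c ^ i * (ζ ^ (k + i)) ^ j)
      = c ^ i * (if N ∣ (k + i) then (N:ℂ) else 0) := by
    intro i _
    rw [← Finset.mul_sum, aux_sum_pow hζ]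
  rw [Finset.sum_congr rfl this]
  rw [Finset.sum_eq_single m]
  · rw [if_pos hd]; ring
  · intro i hi hne
    rw [Finset.mem_range] at hi
    have : ¬ N ∣ (k + i) := by
      intro hdi
      have h1 : (N:ℤ) ∣ ((k+i) - (k+m)) := by
        exact dvd_sub (Int.natCast_dvd_natCast.2 hdi) (Int.natCast_dvd_natCast.2 hd)
      have h2 : ((k+i) - (k+m) : ℤ) = (i:ℤ) - m := by ring
      rw [h2] at h1
      have h3 : (i:ℤ) - m = 0 := Int.eq_zero_of_abs_lt_dvd h1 (by rw [abs_lt]; omega)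
      omega
    rw [if_neg this, mul_zero]
  · intro h; exact absurd (Finset.mem_range.2 hm) h

lemma aux_pf (c a b u v : ℂ) (hab : a * b = 1) (huv : u * v = 1)
    (hc : c ≠ 0) (ha : 1 - c * a ≠ 0) (hb : 1 - c * b ≠ 0) (hc2 : 1 - c ^ 2 ≠ 0) :
    (1 - (u + v) / 2) / ((c + c⁻¹) - (a + b)) =
      c / (2 * (1 - c ^ 2)) *
        ((2 - u - v) / (1 - c * a) + (2 - u - v) / (1 - c * b) - (2 - u - v)) := by
  have hP : (1 - c * a) * (1 - c * b) ≠ 0 := mul_ne_zero ha hb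
  have hd : (c + c⁻¹) - (a + b) = (1 - c * a) * (1 - c * b) / c := by
    field_simp
    linear_combination (-(c^2)) * hab
  have efac : (2 - u - v) / (1 - c * a) + (2 - u - v) / (1 - c * b) - (2 - u - v)
      = (2 - u - v) * (1 / (1 - c * a) + 1 / (1 - c * b) - 1) := by ring
  have einner : 1 / (1 - c * a) + 1 / (1 - c * b) - 1
      = (1 - c ^ 2) / ((1 - c * a) * (1 - c * b)) := by
    field_simp
    linear_combination (-(c^2)) * hab
  rw [hd, efac, einner, div_div_eq_mul_div, mul_div_assoc', div_mul_div_comm,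
    div_eq_div_iff hP (by exact mul_ne_zero (mul_ne_zero two_ne_zero hc2) hP)]
  ring

theorem stmt_9 (ρ : ℝ) (h0 : 0 < |ρ|) (h1 : |ρ| < 1) (N : ℕ) (hN : 1 ≤ N)
    (γ : ℝ) (hγ : γ = ρ + ρ⁻¹) (ℓ : ℕ) (hℓ : ℓ ≤ N) :
    ∑ j ∈ Finset.Icc 1 (N - 1),
        (1 - Real.cos (ℓ * (2 * π * j / N))) / (γ - 2 * Real.cos (2 * π * j / N)) =
      N * ((1 + ρ ^ N) - (ρ ^ ℓ + ρ ^ (N - ℓ))) / ((ρ⁻¹ - ρ) * (1 - ρ ^ N)) := by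
  subst hγ
  have hN0 : (N:ℝ) ≠ 0 := Nat.cast_ne_zero.2 (by omega)
  by_cases hl0 : ℓ = 0
  · subst hl0; simp
  by_cases hlN : ℓ = N
  · subst hlN
    have hc1 : ∀ j : ℕ, Real.cos ((ℓ:ℝ) * (2 * π * j / ℓ)) = 1 := by
      intro j
      have : (ℓ:ℝ) * (2 * π * j / ℓ) = j * (2 * π) := by field_simp
      rw [this, Real.cos_nat_mul_two_pi]
    rw [show ((1:ℝ) + ρ ^ ℓ) - (ρ ^ ℓ + ρ ^ (ℓ - ℓ)) = 0 by simp; ring]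
    simp [hc1]
  -- main case
  have h1l : 1 ≤ ℓ := by omega
  have hlN' : ℓ < N := by omega
  set ℓ' : ℕ := N - ℓ with hl'def
  have hρ0 : ρ ≠ 0 := by intro h; rw [h] at h0; simp at h0
  have hζp : IsPrimitiveRoot (Complex.exp (2 * ↑π * I / ↑N)) N :=
    Complex.isPrimitiveRoot_exp N (by omega)
  set ζ : ℂ := Complex.exp (2 * ↑π * I / ↑N) with hζdef
  have hζabs : ‖ζ‖ = 1 := by
    rw [hζdef, Complex.norm_exp]
    have : (2 * ↑π * I / ↑N : ℂ).re = 0 := by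
      simp [Complex.div_re]
    rw [this, Real.exp_zero]
  have hcabs : ‖((ρ:ℂ))‖ = |ρ| := by rw [Complex.norm_real, Real.norm_eq_abs]
  have hc0 : (ρ:ℂ) ≠ 0 := Complex.ofReal_ne_zero.2 hρ0
  have hc_ne : ∀ j : ℕ, 1 - (ρ:ℂ) * ζ ^ j ≠ 0 := by
    intro j h
    have hcz : (ρ:ℂ) * ζ ^ j = 1 := by linear_combination -h
    have : ‖((ρ:ℂ) * ζ ^ j)‖ = 1 := by rw [hcz]; simp
    rw [norm_mul, norm_pow, hζabs, one_pow, mul_one, hcabs] at this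
    linarith
  have hpowlt : ∀ n : ℕ, 1 ≤ n → ‖((ρ:ℂ) ^ n)‖ < 1 := by
    intro n hn
    rw [norm_pow, hcabs]
    exact pow_lt_one₀ (abs_nonneg ρ) h1 (by omega)
  have hcN : 1 - (ρ:ℂ) ^ N ≠ 0 := by
    intro h
    have hcz : (ρ:ℂ) ^ N = 1 := by linear_combination -h
    have := hpowlt N hN
    rw [hcz] at this; simp at this
  have hc2 : 1 - (ρ:ℂ) ^ 2 ≠ 0 := by
    intro h
    have hcz : (ρ:ℂ) ^ 2 = 1 := by linear_combination -h
    have := hpowlt 2 (by omega)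
    rw [hcz] at this; simp at this
  have hone : ∀ m : ℕ, N ∣ m → ζ ^ m = 1 := fun m hm => (hζp.pow_eq_one_iff_dvd m).2 hm
  have hzeq : ∀ x y w : ℕ, ζ^x * ζ^w = 1 → ζ^y * ζ^w = 1 → ζ^x = ζ^y := by
    intro x y w hx hy
    exact (eq_inv_of_mul_eq_one_left hx).trans (eq_inv_of_mul_eq_one_left hy).symm
  have hmul1 : ∀ j : ℕ, ζ^(ℓ*j) * ζ^(ℓ'*j) = 1 := by
    intro j
    rw [← pow_add]
    refine hone _ ⟨j, ?_⟩
    have hle : ℓ * j ≤ N * j := Nat.mul_le_mul_right j (le_of_lt hlN')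
    rw [hl'def, Nat.sub_mul]
    omega
  -- move to ℂ
  rw [← Complex.ofReal_inj]
  push_cast
  have termEq : ∀ j ∈ Finset.Icc 1 (N-1),
      (1 - Complex.cos ((ℓ:ℂ) * (2 * ↑π * ↑j / ↑N))) /
        ((↑ρ + (↑ρ)⁻¹) - 2 * Complex.cos (2 * ↑π * ↑j / ↑N)) =
      (ρ:ℂ) / (2 * (1 - (ρ:ℂ) ^ 2)) *
        ((2 - ζ^(ℓ*j) - ζ^(ℓ'*j)) / (1 - (ρ:ℂ) * ζ ^ j) +
         (2 - ζ^(ℓ*j) - ζ^(ℓ'*j)) / (1 - (ρ:ℂ) * ζ ^ (N - j)) -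
         (2 - ζ^(ℓ*j) - ζ^(ℓ'*j))) := by
    intro j hj
    rw [Finset.mem_Icc] at hj
    have hexp : ∀ k : ℕ, Complex.exp ((k:ℂ) * (2 * ↑π * ↑j / ↑N) * I) = ζ ^ (k*j) := by
      intro k
      have hNC : (N:ℂ) ≠ 0 := Nat.cast_ne_zero.2 (by omega)
      have harg : (k:ℂ) * (2 * ↑π * ↑j / ↑N) * I = ((k*j : ℕ):ℂ) * (2 * ↑π * I / ↑N) := by
        push_cast
        field_simp
      rw [harg, Complex.exp_nat_mul, hζdef]
    have hmul2 : ζ^j * ζ^(N-j) = 1 := by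
      rw [← pow_add]
      exact hone _ ⟨1, by omega⟩
    have e1 : Complex.cos ((ℓ:ℂ) * (2 * ↑π * ↑j / ↑N)) = (ζ^(ℓ*j) + ζ^(ℓ'*j)) / 2 := by
      have h2c := Complex.two_cos ((ℓ:ℂ) * (2 * ↑π * ↑j / ↑N))
      rw [hexp ℓ] at h2c
      have hneg : Complex.exp (-((ℓ:ℂ) * (2 * ↑π * ↑j / ↑N)) * I) = ζ^(ℓ'*j) := by
        rw [neg_mul, Complex.exp_neg, hexp ℓ]
        exact inv_eq_of_mul_eq_one_left (by rw [mul_comm]; exact hmul1 j)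
      rw [hneg] at h2c
      linear_combination h2c / 2
    have e2 : Complex.cos ((2:ℂ) * ↑π * ↑j / ↑N) = (ζ^j + ζ^(N-j)) / 2 := by
      have h2c := Complex.two_cos ((2:ℂ) * ↑π * ↑j / ↑N)
      have he : Complex.exp ((2:ℂ) * ↑π * ↑j / ↑N * I) = ζ ^ j := by
        have h := hexp 1
        rw [Nat.cast_one, one_mul, one_mul] at h
        exact h
      rw [he] at h2c
      have hneg : Complex.exp (-((2:ℂ) * ↑π * ↑j / ↑N) * I) = ζ^(N-j) := by
        rw [neg_mul, Complex.exp_neg, he]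
        exact inv_eq_of_mul_eq_one_left (by rw [mul_comm]; exact hmul2)
      rw [hneg] at h2c
      linear_combination h2c / 2
    rw [e1, e2]
    rw [show (↑ρ + (↑ρ)⁻¹ : ℂ) - 2 * ((ζ^j + ζ^(N-j))/2) = ((ρ:ℂ) + (ρ:ℂ)⁻¹) - (ζ^j + ζ^(N-j)) by
      ring]
    exact aux_pf (ρ:ℂ) (ζ^j) (ζ^(N-j)) (ζ^(ℓ*j)) (ζ^(ℓ'*j)) hmul2 (hmul1 j) hc0 (hc_ne j)
      (hc_ne (N-j)) hc2
  rw [Finset.sum_congr rfl termEq, ← Finset.mul_sum, Finset.sum_sub_distrib,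
    Finset.sum_add_distrib]
  have hBA : ∑ j ∈ Finset.Icc 1 (N-1), (2 - ζ^(ℓ*j) - ζ^(ℓ'*j)) / (1 - (ρ:ℂ) * ζ ^ (N - j))
      = ∑ j ∈ Finset.Icc 1 (N-1), (2 - ζ^(ℓ*j) - ζ^(ℓ'*j)) / (1 - (ρ:ℂ) * ζ ^ j) := by
    refine Finset.sum_nbij' (fun j => N - j) (fun j => N - j) ?_ ?_ ?_ ?_ ?_
    · intro a ha; rw [Finset.mem_Icc] at ha ⊢; omega
    · intro a ha; rw [Finset.mem_Icc] at ha ⊢; omega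
    · intro a ha; rw [Finset.mem_Icc] at ha; omega
    · intro a ha; rw [Finset.mem_Icc] at ha; omega
    · intro j hj
      rw [Finset.mem_Icc] at hj
      have hsum1 : ∀ m : ℕ, m ≤ N → ζ^(m*(N-j)) * ζ^(m*j) = 1 := by
        intro m hm
        rw [← pow_add, ← Nat.mul_add]
        have h1 : (N - j) + j = N := by omega
        rw [h1]
        exact hone _ ⟨m, Nat.mul_comm m N⟩
      have hga : ζ^(ℓ*(N-j)) = ζ^(ℓ'*j) :=
        hzeq _ _ (ℓ*j) (hsum1 ℓ (by omega)) (by rw [mul_comm]; exact hmul1 j)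
      have hgb : ζ^(ℓ'*(N-j)) = ζ^(ℓ*j) :=
        hzeq _ _ (ℓ'*j) (by
          rw [← pow_add, ← Nat.mul_add]
          have h1 : (N - j) + j = N := by omega
          rw [h1]
          exact hone _ ⟨ℓ', Nat.mul_comm ℓ' N⟩) (hmul1 j)
      rw [hga, hgb]
      ring
  rw [hBA]
  have hIcc : Finset.Icc 1 (N-1) = (Finset.range N).erase 0 := by
    ext x
    rw [Finset.mem_Icc, Finset.mem_erase, Finset.mem_range]
    omega
  have hAfull : ∑ j ∈ Finset.Icc 1 (N-1), (2 - ζ^(ℓ*j) - ζ^(ℓ'*j)) / (1 - (ρ:ℂ) * ζ ^ j)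
      = ∑ j ∈ Finset.range N, (2 - ζ^(ℓ*j) - ζ^(ℓ'*j)) / (1 - (ρ:ℂ) * ζ ^ j) := by
    rw [hIcc]
    refine Finset.sum_erase _ ?_
    simp
    left
    norm_num
  have hCfull : ∑ j ∈ Finset.Icc 1 (N-1), (2 - ζ^(ℓ*j) - ζ^(ℓ'*j))
      = ∑ j ∈ Finset.range N, (2 - ζ^(ℓ*j) - ζ^(ℓ'*j)) := by
    rw [hIcc]
    refine Finset.sum_erase _ ?_
    simp
    norm_num
  have hndl : ¬ N ∣ ℓ := fun h => absurd (Nat.le_of_dvd (by omega) h) (by omega)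
  have hndl' : ¬ N ∣ ℓ' := fun h => absurd (Nat.le_of_dvd (by omega) h) (by omega)
  have TA : ∑ j ∈ Finset.range N, (2 - ζ^(ℓ*j) - ζ^(ℓ'*j)) / (1 - (ρ:ℂ) * ζ ^ j)
      = (2*N - N*(ρ:ℂ)^ℓ' - N*(ρ:ℂ)^ℓ) / (1 - (ρ:ℂ)^N) := by
    have e : ∀ j ∈ Finset.range N, (2 - ζ^(ℓ*j) - ζ^(ℓ'*j)) / (1 - (ρ:ℂ) * ζ ^ j)
        = 2*((ζ^(0:ℕ))^j/(1 - (ρ:ℂ)*ζ^j)) - (ζ^ℓ)^j/(1 - (ρ:ℂ)*ζ^j)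
          - (ζ^ℓ')^j/(1 - (ρ:ℂ)*ζ^j) := by
      intro j _
      rw [pow_mul, pow_mul, pow_zero, one_pow]
      ring
    rw [Finset.sum_congr rfl e, Finset.sum_sub_distrib, Finset.sum_sub_distrib,
      ← Finset.mul_sum,
      aux_T hζp _ hc_ne hcN 0 0 (by omega) (by simp),
      aux_T hζp _ hc_ne hcN ℓ ℓ' (by omega) ⟨1, by omega⟩,
      aux_T hζp _ hc_ne hcN ℓ' ℓ (by omega) ⟨1, by omega⟩]
    rw [pow_zero]
    field_simp
  have TC : ∑ j ∈ Finset.range N, (2 - ζ^(ℓ*j) - ζ^(ℓ'*j)) = 2*(N:ℂ) := by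
    have e : ∀ j ∈ Finset.range N, (2 - ζ^(ℓ*j) - ζ^(ℓ'*j) : ℂ)
        = 2 - (ζ^ℓ)^j - (ζ^ℓ')^j := by
      intro j _
      rw [pow_mul, pow_mul]
    rw [Finset.sum_congr rfl e, Finset.sum_sub_distrib, Finset.sum_sub_distrib,
      Finset.sum_const, aux_sum_pow hζp ℓ, aux_sum_pow hζp ℓ', if_neg hndl, if_neg hndl']
    simp [nsmul_eq_mul]
    ring
  rw [hAfull, hCfull, TA, TC]
  have hinv : ((ρ:ℂ))⁻¹ - (ρ:ℂ) = (1 - (ρ:ℂ)^2) / (ρ:ℂ) := by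
    field_simp
  rw [hinv]
  field_simp
  ring
end

section
/- For any positive integer N and integer 0 ≤ ℓ ≤ N, ∑_{j=1}^{N−1} (1 − cos(2πjℓ/N))/(2 − 2cos(2πj/N)) = ℓ(N−ℓ)/2. -/
open Real Finset


lemma normSq_one_sub_exp (θ : ℝ) :
    Complex.normSq (1 - Complex.exp (θ * Complex.I)) = 2 - 2 * Real.cos θ := by
  rw [Complex.normSq_apply]
  simp [Complex.sub_re, Complex.sub_im, Complex.exp_ofReal_mul_I_re,
    Complex.exp_ofReal_mul_I_im]
  nlinarith [Real.sin_sq_add_cos_sq θ]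

lemma key2 (θ : ℝ) (k : ℕ) :
    2 * (1 - Real.cos (k * θ)) =
      (2 - 2 * Real.cos θ) *
        ∑ m ∈ range k, ∑ m' ∈ range k, Real.cos (((m : ℝ) - m') * θ) := by
  set z := Complex.exp ((θ : ℂ) * Complex.I) with hz
  have hpow : ∀ m : ℕ, z ^ m = Complex.exp (((m * θ : ℝ) : ℂ) * Complex.I) := by
    intro m
    rw [hz, ← Complex.exp_nat_mul]
    push_cast
    ring_nf
  have hgeom : (1 : ℂ) - Complex.exp (((k * θ : ℝ) : ℂ) * Complex.I)
      = (1 - z) * ∑ m ∈ range k, z ^ m := by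
    have h := geom_sum_mul z k
    rw [← hpow k]
    linear_combination h
  have h3 : Complex.normSq (∑ m ∈ range k, z ^ m)
      = ∑ m ∈ range k, ∑ m' ∈ range k, Real.cos (((m : ℝ) - m') * θ) := by
    have e1 : (∑ m ∈ range k, z ^ m) * (starRingEnd ℂ) (∑ m ∈ range k, z ^ m)
        = ∑ m ∈ range k, ∑ m' ∈ range k,
            Complex.exp (((((m : ℝ) - m') * θ : ℝ) : ℂ) * Complex.I) := by
      rw [map_sum, Finset.sum_mul_sum]
      refine Finset.sum_congr rfl fun m _ => Finset.sum_congr rfl fun m' _ => ?_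
      rw [hpow m, hpow m', ← Complex.exp_conj, ← Complex.exp_add]
      congr 1
      have : (starRingEnd ℂ) ((((m' : ℝ) * θ : ℝ) : ℂ) * Complex.I)
          = -((((m' : ℝ) * θ : ℝ) : ℂ) * Complex.I) := by
        rw [map_mul, Complex.conj_ofReal, Complex.conj_I]
        ring
      rw [this]
      push_cast
      ring
    have e2 : Complex.normSq (∑ m ∈ range k, z ^ m)
        = ((∑ m ∈ range k, z ^ m) * (starRingEnd ℂ) (∑ m ∈ range k, z ^ m)).re := by
      rw [Complex.mul_conj]
      simp
    rw [e2, e1, Complex.re_sum]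
    refine Finset.sum_congr rfl fun m _ => ?_
    rw [Complex.re_sum]
    exact Finset.sum_congr rfl fun m' _ => Complex.exp_ofReal_mul_I_re _
  have main : Complex.normSq (1 - Complex.exp (((k * θ : ℝ) : ℂ) * Complex.I))
      = Complex.normSq (1 - z) * Complex.normSq (∑ m ∈ range k, z ^ m) := by
    rw [hgeom, map_mul]
  rw [normSq_one_sub_exp, hz, normSq_one_sub_exp θ, h3] at main
  linarith [main]


lemma cos_sum_range (N : ℕ) (hN : 1 ≤ N) (d : ℤ) (hd : d ≠ 0) (hdN : d.natAbs < N) :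
    ∑ j ∈ Finset.range N, Real.cos (2 * π * j * d / N) = 0 := by
  have hN0 : (N : ℝ) ≠ 0 := by positivity
  set ζ := Complex.exp (((2 * π * d / N : ℝ) : ℂ) * Complex.I) with hζ
  have hpow : ∀ j : ℕ, ζ ^ j = Complex.exp (((2 * π * j * d / N : ℝ) : ℂ) * Complex.I) := by
    intro j
    rw [hζ, ← Complex.exp_nat_mul]
    congr 1
    push_cast
    ring
  have hζN : ζ ^ N = 1 := by
    rw [hpow N]
    have harg : (2 * π * (N : ℝ) * d / N : ℝ) = (d : ℝ) * (2 * π) := by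
      field_simp
    rw [show (((2 * π * (N:ℕ) * d / N : ℝ)) : ℂ) * Complex.I
        = (d : ℂ) * (2 * (π : ℂ) * Complex.I) by rw [harg]; push_cast; ring]
    exact Complex.exp_int_mul_two_pi_mul_I d
  have hζ1 : ζ ≠ 1 := by
    intro h
    rw [hζ, Complex.exp_eq_one_iff] at h
    obtain ⟨n, hn⟩ := h
    have hr : 2 * π * (d : ℝ) / N = (n : ℝ) * (2 * π) := by
      have h2 := congrArg Complex.im hn
      simpa using h2
    have h2π : (2 * π : ℝ) ≠ 0 := by positivity
    have hdr : (d : ℝ) = n * N := by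
      apply mul_left_cancel₀ h2π
      field_simp at hr
      linear_combination (2 * π) * hr
    have hdn : d = n * N := by exact_mod_cast hdr
    rcases eq_or_ne n 0 with rfl | hn0
    · simp at hdn; exact hd hdn
    · have hle : N ≤ d.natAbs := by
        have h1 : d.natAbs = n.natAbs * N := by
          rw [hdn, Int.natAbs_mul, Int.natAbs_natCast]
        have h2 : 1 ≤ n.natAbs := Int.natAbs_pos.mpr hn0
        rw [h1]; nlinarith
      omega
  have hsum : ∑ j ∈ range N, ζ ^ j = 0 := by
    have h := geom_sum_mul ζ N
    rw [hζN, sub_self] at h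
    rcases mul_eq_zero.mp h with h | h
    · exact h
    · exact absurd (sub_eq_zero.mp h) hζ1
  have hre : (∑ j ∈ range N, ζ ^ j).re = 0 := by rw [hsum]; rfl
  rw [Complex.re_sum] at hre
  rw [← hre]
  refine Finset.sum_congr rfl fun j _ => ?_
  rw [hpow j, Complex.exp_ofReal_mul_I_re]

lemma cos_sum_Icc (N : ℕ) (hN : 1 ≤ N) (d : ℤ) (hd : d ≠ 0) (hdN : d.natAbs < N) :
    ∑ j ∈ Finset.Icc 1 (N - 1), Real.cos (2 * π * j * d / N) = -1 := by
  have hins : Finset.range N = insert 0 (Finset.Icc 1 (N - 1)) := by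
    ext x
    simp only [Finset.mem_range, Finset.mem_insert, Finset.mem_Icc]
    omega
  have h0 : (0 : ℕ) ∉ Finset.Icc 1 (N - 1) := by simp
  have h := cos_sum_range N hN d hd hdN
  rw [hins, Finset.sum_insert h0] at h
  have h00 : Real.cos (2 * π * ((0 : ℕ) : ℝ) * d / N) = 1 := by
    norm_num
  rw [h00] at h
  linarith

theorem stmt_10 (N : ℕ) (hN : 1 ≤ N) (ℓ : ℕ) (hℓ : ℓ ≤ N) :
    ∑ j ∈ Finset.Icc 1 (N - 1),
        (1 - Real.cos (2 * π * j * ℓ / N)) / (2 - 2 * Real.cos (2 * π * j / N)) =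
      (ℓ : ℝ) * (N - ℓ) / 2 := by
  have hN0 : (0 : ℝ) < N := by exact_mod_cast hN
  have step1 : ∀ j ∈ Finset.Icc 1 (N - 1),
      (1 - Real.cos (2 * π * j * ℓ / N)) / (2 - 2 * Real.cos (2 * π * j / N))
        = (∑ m ∈ range ℓ, ∑ m' ∈ range ℓ,
            Real.cos (((m : ℝ) - m') * (2 * π * j / N))) / 2 := by
    intro j hj
    simp only [Finset.mem_Icc] at hj
    have hj1 : (1 : ℝ) ≤ j := by exact_mod_cast hj.1
    have hjN : (j : ℝ) < N := by
      have : j < N := by omega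
      exact_mod_cast this
    have hθpos : 0 < 2 * π * j / N := by
      have := Real.pi_pos
      positivity
    have hθlt : 2 * π * (j : ℝ) / N < 2 * π := by
      rw [div_lt_iff₀ hN0]
      nlinarith [Real.pi_pos]
    have hcos : Real.cos (2 * π * j / N) ≠ 1 := by
      intro h
      rw [Real.cos_eq_one_iff_of_lt_of_lt (by linarith [Real.pi_pos]) hθlt] at h
      linarith
    have hden : (2 : ℝ) - 2 * Real.cos (2 * π * j / N) ≠ 0 := by
      intro h; apply hcos; linarith
    have hk := key2 (2 * π * j / N) ℓ
    rw [show (2 * π * (j : ℝ) * ℓ / N : ℝ) = (ℓ : ℝ) * (2 * π * j / N) by ring]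
    rw [div_eq_div_iff hden (by norm_num)]
    linear_combination hk
  rw [Finset.sum_congr rfl step1, ← Finset.sum_div]
  have hswap : ∑ j ∈ Finset.Icc 1 (N - 1), ∑ m ∈ range ℓ, ∑ m' ∈ range ℓ,
        Real.cos (((m : ℝ) - m') * (2 * π * j / N))
      = ∑ m ∈ range ℓ, ∑ m' ∈ range ℓ, ∑ j ∈ Finset.Icc 1 (N - 1),
        Real.cos (((m : ℝ) - m') * (2 * π * j / N)) := by
    rw [Finset.sum_comm]
    exact Finset.sum_congr rfl fun m _ => Finset.sum_comm
  rw [hswap]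
  have hinner : ∀ m ∈ range ℓ, ∀ m' ∈ range ℓ,
      ∑ j ∈ Finset.Icc 1 (N - 1), Real.cos (((m : ℝ) - m') * (2 * π * j / N))
        = if m = m' then (N : ℝ) - 1 else -1 := by
    intro m hm m' hm'
    simp only [Finset.mem_range] at hm hm'
    by_cases h : m = m'
    · subst h
      rw [if_pos rfl]
      have : ∀ j ∈ Finset.Icc 1 (N - 1),
          Real.cos (((m : ℝ) - m) * (2 * π * j / N)) = 1 := by
        intro j _; simp
      rw [Finset.sum_congr rfl this, Finset.sum_const, Nat.card_Icc]
      have : N - 1 + 1 - 1 = N - 1 := by omega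
      rw [this]
      have : ((N - 1 : ℕ) : ℝ) = (N : ℝ) - 1 := by
        push_cast [Nat.cast_sub hN]; ring
      simp [this]
    · set d : ℤ := (m : ℤ) - m' with hd_def
      have hd : d ≠ 0 := by omega
      have hdN : d.natAbs < N := by omega
      have hsum := cos_sum_Icc N hN d hd hdN
      rw [if_neg h, ← hsum]
      refine Finset.sum_congr rfl fun j _ => ?_
      congr 1
      rw [hd_def]
      push_cast
      ring
  rw [Finset.sum_congr rfl fun m hm => Finset.sum_congr rfl (hinner m hm)]
  have hrow : ∀ m ∈ range ℓ, ∑ m' ∈ range ℓ,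
      (if m = m' then (N : ℝ) - 1 else -1) = (N : ℝ) - ℓ := by
    intro m hm
    have e : ∀ m' ∈ range ℓ, (if m = m' then (N : ℝ) - 1 else -1)
        = (if m = m' then (N : ℝ) else 0) + (-1) := by
      intro m' _; split_ifs <;> ring
    rw [Finset.sum_congr rfl e, Finset.sum_add_distrib, Finset.sum_ite_eq,
      if_pos hm, Finset.sum_const, Finset.card_range]
    push_cast
    ring
  rw [Finset.sum_congr rfl hrow, Finset.sum_const, Finset.card_range]
  push_cast
  ring
end
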